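/- Let v be an n-dimensional unit vector with entries in D[ω]. Then there exists a finite product G of one- and two-level operators of the forms X_{[α,β]}, H_{[α,β]}, ω_{[α]} such that Gv = eₙ, the standard basis vector with 1 in the n-th coordinate. -/

import Mathlib

noncomputable section
open Complex

def ω : ℂ := Complex.exp (Real.pi * Complex.I / 4)

def δ : ℂ := 1 + ω

def inZω (x : ℂ) : Prop := ∃ a b c d : ℤ, x = a * ω^3 + b * ω^2 + c * ω + d

def inD (x : ℂ) : Prop := ∃ a : ℤ, ∃ n : ℕ, x = a / 2^n

def inDω (x : ℂ) : Prop :=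
  ∃ a b c d : ℂ, inD a ∧ inD b ∧ inD c ∧ inD d ∧ x = a * ω^3 + b * ω^2 + c * ω + d

def dvdZ (a b : ℂ) : Prop := ∃ t : ℂ, inZω t ∧ b = a * t

def Xmat (n : ℕ) (α β : Fin n) : Matrix (Fin n) (Fin n) ℂ :=
  Matrix.of fun i j =>
    if i = α then (if j = β then 1 else 0)
    else if i = β then (if j = α then 1 else 0)
    else if i = j then 1 else 0

def Hmat (n : ℕ) (α β : Fin n) : Matrix (Fin n) (Fin n) ℂ :=
  Matrix.of fun i j =>
    if i = α ∧ j = α then (Real.sqrt 2 : ℂ)⁻¹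
    else if i = α ∧ j = β then (Real.sqrt 2 : ℂ)⁻¹
    else if i = β ∧ j = α then (Real.sqrt 2 : ℂ)⁻¹
    else if i = β ∧ j = β then -(Real.sqrt 2 : ℂ)⁻¹
    else if i = j then 1 else 0

def Wmat (n : ℕ) (α : Fin n) : Matrix (Fin n) (Fin n) ℂ :=
  Matrix.of fun i j => if i = j then (if i = α then ω else 1) else 0

def gens (n : ℕ) : Set (Matrix (Fin n) (Fin n) ℂ) :=
  {M | (∃ α β : Fin n, α < β ∧ (M = Xmat n α β ∨ M = Hmat n α β)) ∨
       (∃ α : Fin n, M = Wmat n α)}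

/-!
Put `δ = 1 + ω`. It generates the prime of `ℤ[ω]` above `2` (`δ⁴ = 2 · unit`), so `δᵏ v` has
entries in `ℤ[ω]` for some `k`; induct on `k`, and for fixed `k` on the number of entries of
`δᵏ v` that are not divisible by `δ`.

Writing `|x|² = N + M√2` with `N, M ∈ ℤ`, the parity of `N` records whether `δ ∣ x`. Since
`∑ |δᵏ vᵢ|² = (2 + √2)ᵏ` has even rational part when `k ≥ 1`, the number of such entries is
even. Modulo `δ³` each of them is a power of `ω`, so after multiplying one of two such entries by
a suitable power of `ω`, the Hadamard gate `H_[i,j]` turns both into multiples of `δ` and leaves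
the others alone. When none is left, `δᵏ⁻¹ v` is already integral. For `k = 0` the only unit
vectors over `ℤ[ω]` are the `ωᵖ eᵢ`, which `ω_[i]` and `X_[i,n]` carry to `eₙ`.
-/

open ComplexConjugate
open scoped Matrix
open Finset

lemma ω_eq : ω = (√2 / 2 : ℝ) + (√2 / 2 : ℝ) * I := by
  rw [ω, show (Real.pi : ℂ) * I / 4 = (Real.pi / 4 : ℝ) * I by push_cast; ring, exp_mul_I,
    ← ofReal_cos, ← ofReal_sin, Real.cos_pi_div_four, Real.sin_pi_div_four]

lemma ω_pow_four : ω ^ 4 = -1 := by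
  rw [ω, ← exp_nat_mul, show ((4 : ℕ) : ℂ) * (Real.pi * I / 4) = Real.pi * I by push_cast; ring,
    exp_pi_mul_I]

lemma sqrt_two_sq : ((√2 : ℝ) : ℂ) ^ 2 = 2 := by
  rw [← ofReal_pow, Real.sq_sqrt zero_le_two, ofReal_ofNat]

lemma ω_sq : ω ^ 2 = I := by
  rw [ω_eq]
  push_cast
  linear_combination ((1 + 2 * I + I ^ 2) / 4) * sqrt_two_sq + (1 / 2 : ℂ) * I_sq

lemma sqrt_two_eq : ((√2 : ℝ) : ℂ) = ω - ω ^ 3 := by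
  rw [pow_succ, ω_sq, ω_eq]
  push_cast
  linear_combination ((√2 : ℂ) / 2) * I_sq

lemma conj_ω : conj ω = -ω ^ 3 := by
  rw [pow_succ, ω_sq, ω_eq]
  simp only [map_add, map_mul, conj_ofReal, conj_I]
  push_cast
  linear_combination ((√2 : ℂ) / 2) * I_sq

lemma conj_ω_mul_self : conj ω * ω = 1 := by
  rw [conj_ω]
  linear_combination -ω_pow_four

lemma δ_ne_zero : δ ≠ 0 := by
  intro h
  have hω : ω = -1 := by rw [δ] at h; linear_combination h
  have := ω_sq
  rw [hω] at this
  norm_num [Complex.ext_iff] at this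

lemma conj_δ_mul_self : conj δ * δ = 2 + √2 := by
  rw [sqrt_two_eq, δ, map_add, map_one, conj_ω]
  linear_combination -ω_pow_four

lemma δ_sq : δ ^ 2 = (1 + ω + ω ^ 2) * √2 := by
  rw [sqrt_two_eq, δ]
  linear_combination (1 + ω) * ω_pow_four

lemma two_eq_δ_cube_mul : (2 : ℂ) = δ ^ 3 * (-ω ^ 3 - ω ^ 2 + 2 * ω - 2) := by
  rw [δ]
  linear_combination (4 + 4 * ω + ω ^ 2) * ω_pow_four

lemma δ_pow_four : δ ^ 4 = 2 * (2 * ω ^ 3 + 3 * ω ^ 2 + 2 * ω) := by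
  rw [δ]
  linear_combination ω_pow_four

/-- Membership is definitionally `inZω`, so members serve directly as witnesses of `dvdZ`. -/
def ringZω : Subring ℂ where
  carrier := {x | inZω x}
  mul_mem' := by
    rintro _ _ ⟨a, b, c, d, rfl⟩ ⟨a', b', c', d', rfl⟩
    refine ⟨d * a' + c * b' + b * c' + a * d', d * b' + c * c' + b * d' - a * a',
      d * c' + c * d' - b * a' - a * b', d * d' - c * a' - b * b' - a * c', ?_⟩
    push_cast
    linear_combination
      (c * a' + b * b' + a * c' + (b * a' + a * b') * ω + a * a' * ω ^ 2 : ℂ) * ω_pow_four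
  one_mem' := ⟨0, 0, 0, 1, by simp⟩
  add_mem' := by
    rintro _ _ ⟨a, b, c, d, rfl⟩ ⟨a', b', c', d', rfl⟩
    exact ⟨a + a', b + b', c + c', d + d', by push_cast; ring⟩
  zero_mem' := ⟨0, 0, 0, 0, by simp⟩
  neg_mem' := by
    rintro _ ⟨a, b, c, d, rfl⟩
    exact ⟨-a, -b, -c, -d, by push_cast; ring⟩

lemma ω_mem : ω ∈ ringZω := ⟨0, 0, 1, 0, by simp⟩

lemma δ_mem : δ ∈ ringZω := add_mem (one_mem _) ω_mem

section Divisibility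

variable {a x y : ℂ}

lemma dvdZ_of_eq {t : ℂ} (ht : t ∈ ringZω) (h : x = a * t) : dvdZ a x := ⟨t, ht, h⟩

lemma dvdZ.add (hx : dvdZ a x) (hy : dvdZ a y) : dvdZ a (x + y) := by
  obtain ⟨s, hs, rfl⟩ := hx
  obtain ⟨t, ht, rfl⟩ := hy
  exact dvdZ_of_eq (add_mem hs ht) (by ring)

lemma dvdZ.mul_left {t : ℂ} (ht : t ∈ ringZω) (hx : dvdZ a x) : dvdZ a (t * x) := by
  obtain ⟨s, hs, rfl⟩ := hx
  exact dvdZ_of_eq (mul_mem ht hs) (by ring)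

lemma dvdZ.sub (hx : dvdZ a x) (hy : dvdZ a y) : dvdZ a (x - y) := by
  simpa [sub_eq_add_neg] using hx.add (hy.mul_left (neg_mem (one_mem ringZω)))

lemma dvdZ.mem (ha : a ∈ ringZω) (hx : dvdZ a x) : x ∈ ringZω := by
  obtain ⟨t, ht, rfl⟩ := hx
  exact mul_mem ha ht

lemma mem_of_dvdZ_δ_mul (h : dvdZ δ (δ * y)) : y ∈ ringZω := by
  obtain ⟨t, ht, h⟩ := h
  rwa [mul_left_cancel₀ δ_ne_zero h]

lemma dvdZ_δ_cube_two : dvdZ (δ ^ 3) 2 :=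
  dvdZ_of_eq (by apply_rules [ω_mem, ofNat_mem, pow_mem, neg_mem, add_mem, sub_mem, mul_mem])
    two_eq_δ_cube_mul

lemma dvdZ_δ_two : dvdZ δ 2 := by
  obtain ⟨t, ht, h⟩ := dvdZ_δ_cube_two
  exact dvdZ_of_eq (mul_mem (pow_mem δ_mem 2) ht) (by rw [h]; ring)

lemma dvdZ_δ_div_sqrt_two (hx : dvdZ (δ ^ 3) x) : dvdZ δ (x / √2) := by
  obtain ⟨t, ht, rfl⟩ := hx
  refine dvdZ_of_eq (t := (1 + ω + ω ^ 2) * t)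
    (by apply_rules [ω_mem, one_mem, pow_mem, add_mem, mul_mem]) ?_
  have : ((√2 : ℝ) : ℂ) ≠ 0 := by exact_mod_cast (Real.sqrt_pos.mpr zero_lt_two).ne'
  rw [div_eq_iff this, pow_succ', δ_sq]
  ring

end Divisibility

lemma int_eq_of_add_mul_sqrt_two_eq {p q p' q' : ℤ}
    (h : (p : ℂ) + q * √2 = p' + q' * √2) : p = p' := by
  have hre : (p : ℝ) + q * √2 = p' + q' * √2 := by exact_mod_cast congrArg re h
  have hre' : ((q' - q : ℤ) : ℝ) * √2 = (p - p' : ℤ) := by push_cast; linarith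
  by_cases hq : q' - q = 0
  · rw [hq, Int.cast_zero, zero_mul, eq_comm, Int.cast_eq_zero] at hre'
    omega
  · exact absurd hre' ((irrational_sqrt_two.intCast_mul hq).ne_int _)

lemma conj_mul_self_eq (a b c d : ℤ) :
    conj (a * ω ^ 3 + b * ω ^ 2 + c * ω + d) * (a * ω ^ 3 + b * ω ^ 2 + c * ω + d) =
      ((a ^ 2 + b ^ 2 + c ^ 2 + d ^ 2 : ℤ) : ℂ) + ((a * b + b * c + c * d - a * d : ℤ) : ℂ) * √2 := by
  simp only [map_add, map_mul, map_pow, map_intCast, conj_ω, sqrt_two_eq]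
  push_cast
  linear_combination (-c * c - b * b - a * a + (-b * c + a * d - a * b) * ω + b * d * ω ^ 2
    + (b * c + a * b) * ω ^ 3 + (b * b + a * a) * ω ^ 4 + (-a * d + a * b) * ω ^ 5
    - a * c * ω ^ 6 - a * b * ω ^ 7 - a * a * ω ^ 8 : ℂ) * ω_pow_four

lemma δ_expansion (a b c d : ℤ) :
    (a * ω ^ 3 + b * ω ^ 2 + c * ω + d : ℂ) =
      a * δ ^ 3 + (b - 3 * a : ℤ) * δ ^ 2 + (3 * a - 2 * b + c : ℤ) * δ + (d - c + b - a : ℤ) := by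
  rw [δ]
  push_cast
  ring

lemma dvdZ_δ_iff_even (a b c d : ℤ) :
    dvdZ δ (a * ω ^ 3 + b * ω ^ 2 + c * ω + d) ↔ Even (a + b + c + d) := by
  constructor
  · rintro ⟨_, ⟨a', b', c', d', rfl⟩, h⟩
    have hnorm := conj_mul_self_eq a b c d
    rw [h, map_mul, mul_mul_mul_comm, conj_δ_mul_self, conj_mul_self_eq] at hnorm
    set N' : ℤ := a' ^ 2 + b' ^ 2 + c' ^ 2 + d' ^ 2
    set M' : ℤ := a' * b' + b' * c' + c' * d' - a' * d'
    -- `|δ|² = 2 + √2` makes the rational part of `|x|² = |δ|² |t|²` even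
    have hN : a ^ 2 + b ^ 2 + c ^ 2 + d ^ 2 = 2 * (N' + M') :=
      int_eq_of_add_mul_sqrt_two_eq (q' := N' + 2 * M') (by
        rw [← hnorm]
        push_cast
        linear_combination (M' : ℂ) * sqrt_two_sq)
    have hev : Even (a ^ 2 + b ^ 2 + c ^ 2 + d ^ 2) := ⟨_, hN.trans (two_mul _)⟩
    simpa [parity_simps] using hev
  · rintro ⟨s, hs⟩
    rw [δ_expansion, show d - c + b - a = (s - a - c) * 2 by omega, Int.cast_mul, Int.cast_two]
    refine dvdZ.add (dvdZ_of_eq (t := a * δ ^ 2 + (b - 3 * a : ℤ) * δ + (3 * a - 2 * b + c : ℤ))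
      ?_ (by ring)) (dvdZ_δ_two.mul_left (intCast_mem _ _))
    apply_rules [δ_mem, intCast_mem, pow_mem, add_mem, mul_mem]

lemma dvdZ_δ_cube_of_eq {z : ℂ} (t u₀ u₁ u₂ : ℤ)
    (h : z = δ ^ 3 * t + (u₀ + u₁ * δ + u₂ * δ ^ 2) * 2) : dvdZ (δ ^ 3) z :=
  h ▸ (dvdZ_of_eq (intCast_mem _ t) rfl).add (dvdZ_δ_cube_two.mul_left
    (by apply_rules [δ_mem, intCast_mem, pow_mem, add_mem, mul_mem]))

/-- Since `ω = δ - 1`, the powers `1, ω, ω², ω³` are congruent to `1, 1 + δ, 1 + δ², 1 + δ + δ²`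
modulo `2` and `δ³`; these are all the residues prime to `δ`. -/
lemma exists_dvdZ_δ_cube_sub_ω_pow {x : ℂ} (hx : x ∈ ringZω) (hodd : ¬ dvdZ δ x) :
    ∃ p : ℕ, dvdZ (δ ^ 3) (x - ω ^ p) := by
  obtain ⟨a, b, c, d, rfl⟩ := hx
  obtain ⟨s₀, hs₀⟩ : ∃ s₀, d - c + b - a = 2 * s₀ + 1 := by
    obtain ⟨s, hs⟩ := Int.not_even_iff_odd.mp ((dvdZ_δ_iff_even a b c d).not.mp hodd)
    exact ⟨s - a - c, by omega⟩
  obtain ⟨s₁, hs₁ | hs₁⟩ := Int.even_or_odd' (3 * a - 2 * b + c) <;>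
  obtain ⟨s₂, hs₂ | hs₂⟩ := Int.even_or_odd' (b - 3 * a)
  · exact ⟨0, dvdZ_δ_cube_of_eq a s₀ s₁ s₂
      (by rw [δ_expansion, hs₀, hs₁, hs₂, δ]; push_cast; ring)⟩
  · exact ⟨2, dvdZ_δ_cube_of_eq a s₀ (s₁ + 1) s₂
      (by rw [δ_expansion, hs₀, hs₁, hs₂, δ]; push_cast; ring)⟩
  · exact ⟨1, dvdZ_δ_cube_of_eq a (s₀ + 1) s₁ s₂
      (by rw [δ_expansion, hs₀, hs₁, hs₂, δ]; push_cast; ring)⟩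
  · exact ⟨3, dvdZ_δ_cube_of_eq (a - 1) (s₀ + 1) (s₁ - 1) (s₂ + 2)
      (by rw [δ_expansion, hs₀, hs₁, hs₂, δ]; push_cast; ring)⟩

lemma exists_dvdZ_δ_cube_add_ω_pow_mul {x y : ℂ} (hx : x ∈ ringZω) (hy : y ∈ ringZω)
    (hx' : ¬ dvdZ δ x) (hy' : ¬ dvdZ δ y) : ∃ m : ℕ, dvdZ (δ ^ 3) (x + ω ^ m * y) := by
  obtain ⟨p, hp⟩ := exists_dvdZ_δ_cube_sub_ω_pow hx hx'
  obtain ⟨q, hq⟩ := exists_dvdZ_δ_cube_sub_ω_pow hy hy'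
  have hm : ω ^ (p + 4 + 7 * q) * ω ^ q = -ω ^ p := by
    rw [← pow_add, show p + 4 + 7 * q + q = p + 4 * (2 * q + 1) by ring, pow_add, pow_mul,
      ω_pow_four, Odd.neg_one_pow ⟨q, rfl⟩]
    ring
  refine ⟨p + 4 + 7 * q, ?_⟩
  convert hp.add (hq.mul_left (pow_mem ω_mem (p + 4 + 7 * q))) using 1
  linear_combination hm

lemma exists_ω_pow_eq_of_sq_add_sq_eq_one {a b c d : ℤ} (h : a ^ 2 + b ^ 2 + c ^ 2 + d ^ 2 = 1) :
    ∃ p : ℕ, (a * ω ^ 3 + b * ω ^ 2 + c * ω + d : ℂ) = ω ^ p := by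
  obtain ⟨ha₁, ha₂⟩ : -1 ≤ a ∧ a ≤ 1 := by
    constructor <;> nlinarith [sq_nonneg b, sq_nonneg c, sq_nonneg d]
  obtain ⟨hb₁, hb₂⟩ : -1 ≤ b ∧ b ≤ 1 := by
    constructor <;> nlinarith [sq_nonneg a, sq_nonneg c, sq_nonneg d]
  obtain ⟨hc₁, hc₂⟩ : -1 ≤ c ∧ c ≤ 1 := by
    constructor <;> nlinarith [sq_nonneg a, sq_nonneg b, sq_nonneg d]
  obtain ⟨hd₁, hd₂⟩ : -1 ≤ d ∧ d ≤ 1 := by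
    constructor <;> nlinarith [sq_nonneg a, sq_nonneg b, sq_nonneg c]
  have h4 (j : ℕ) : ω ^ (j + 4) = -ω ^ j := by rw [pow_add, ω_pow_four, mul_neg_one]
  interval_cases a <;> interval_cases b <;> interval_cases c <;> interval_cases d <;>
    first
    | omega
    | (refine ⟨0, ?_⟩; push_cast; ring1) | (refine ⟨1, ?_⟩; push_cast; ring1)
    | (refine ⟨2, ?_⟩; push_cast; ring1) | (refine ⟨3, ?_⟩; push_cast; ring1)
    | (refine ⟨0 + 4, ?_⟩; rw [h4]; push_cast; ring1)
    | (refine ⟨1 + 4, ?_⟩; rw [h4]; push_cast; ring1)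
    | (refine ⟨2 + 4, ?_⟩; rw [h4]; push_cast; ring1)
    | (refine ⟨3 + 4, ?_⟩; rw [h4]; push_cast; ring1)

lemma Int.even_sum_iff_even_card_odd {ι : Type*} (s : Finset ι) (f : ι → ℤ) :
    Even (∑ i ∈ s, f i) ↔ Even #{i ∈ s | Odd (f i)} := by
  rw [← ZMod.intCast_eq_zero_iff_even, ← ZMod.natCast_eq_zero_iff_even, Int.cast_sum,
    Finset.natCast_card_filter]
  refine Eq.congr_left (Finset.sum_congr rfl fun i _ => ?_)
  split_ifs with h
  · exact ZMod.intCast_eq_one_iff_odd.mpr h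
  · exact ZMod.intCast_eq_zero_iff_even.mpr (Int.not_odd_iff_even.mp h)

section Vectors

variable {ι : Type*} [Fintype ι]

def sqNorm (x : ι → ℂ) : ℂ := ∑ i, conj (x i) * x i

lemma sqNorm_const_mul (z : ℂ) (x : ι → ℂ) :
    sqNorm (fun i => z * x i) = conj z * z * sqNorm x := by
  simp only [sqNorm, Finset.mul_sum, map_mul]
  exact Finset.sum_congr rfl fun i _ => by ring

lemma sqNorm_eq_of_coords {u : ι → ℂ} (a b c d : ι → ℤ)
    (hu : ∀ i, u i = a i * ω ^ 3 + b i * ω ^ 2 + c i * ω + d i) :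
    sqNorm u = ((∑ i, (a i ^ 2 + b i ^ 2 + c i ^ 2 + d i ^ 2) : ℤ) : ℂ) +
      ((∑ i, (a i * b i + b i * c i + c i * d i - a i * d i) : ℤ) : ℂ) * √2 := by
  simp only [sqNorm, hu, conj_mul_self_eq]
  rw [Int.cast_sum, Int.cast_sum, Finset.sum_mul, ← Finset.sum_add_distrib]

lemma Fintype.sum_eq_sum_of_eq_off {M : Type*} [DecidableEq ι] [AddCommMonoid M] {f g : ι → M}
    (s : Finset ι) (hs : ∑ i ∈ s, f i = ∑ i ∈ s, g i) (h : ∀ i ∉ s, f i = g i) :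
    ∑ i, f i = ∑ i, g i := by
  rw [← Finset.sum_add_sum_compl s f, ← Finset.sum_add_sum_compl s g, hs,
    Finset.sum_congr rfl fun i hi => h i (Finset.mem_compl.mp hi)]

lemma exists_eq_one_of_sum_eq_one [DecidableEq ι] {N : ι → ℤ} (hN : ∀ i, 0 ≤ N i)
    (h : ∑ i, N i = 1) : ∃ i, N i = 1 ∧ ∀ j ≠ i, N j = 0 := by
  obtain ⟨i, hi⟩ : ∃ i, N i ≠ 0 := by
    by_contra! h₀
    simp [h₀] at h
  have hzero (j : ι) (hj : j ≠ i) : N j = 0 := by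
    have := Finset.sum_le_sum_of_subset_of_nonneg (Finset.subset_univ {i, j}) fun k _ _ => hN k
    rw [Finset.sum_pair hj.symm, h] at this
    linarith [hN i, hN j, lt_of_le_of_ne (hN i) hi.symm]
  refine ⟨i, ?_, hzero⟩
  rwa [← Finset.add_sum_erase _ _ (Finset.mem_univ i),
    Finset.sum_eq_zero fun j hj => hzero j (Finset.ne_of_mem_erase hj), add_zero] at h

lemma eq_single_ω_pow_of_sqNorm_eq_one [DecidableEq ι] {u : ι → ℂ} (hu : ∀ i, u i ∈ ringZω)
    (h : sqNorm u = 1) : ∃ i, ∃ p : ℕ, u = Pi.single i (ω ^ p) := by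
  choose a b c d hz using hu
  obtain ⟨i, hi, hzero⟩ := exists_eq_one_of_sum_eq_one (fun i => by positivity)
    (int_eq_of_add_mul_sqrt_two_eq (q' := 0)
      ((sqNorm_eq_of_coords a b c d hz).symm.trans (by rw [h]; simp)))
  obtain ⟨p, hp⟩ := exists_ω_pow_eq_of_sq_add_sq_eq_one hi
  refine ⟨i, p, funext fun j => ?_⟩
  rcases eq_or_ne j i with rfl | hj
  · rw [hz, hp, Pi.single_eq_same]
  · have h₀ := hzero j hj
    obtain ⟨ha, hb, hc, hd⟩ : a j = 0 ∧ b j = 0 ∧ c j = 0 ∧ d j = 0 := by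
      refine ⟨?_, ?_, ?_, ?_⟩ <;>
        nlinarith [sq_nonneg (a j), sq_nonneg (b j), sq_nonneg (c j), sq_nonneg (d j)]
    simp [hz, ha, hb, hc, hd, Pi.single_eq_of_ne hj]

open scoped Classical in
def oddIndices (u : ι → ℂ) : Finset ι := {i | ¬ dvdZ δ (u i)}

lemma mem_oddIndices {u : ι → ℂ} {i : ι} : i ∈ oddIndices u ↔ ¬ dvdZ δ (u i) := by
  simp [oddIndices]

lemma even_card_oddIndices {u : ι → ℂ} (hu : ∀ i, u i ∈ ringZω) {A B : ℤ}
    (h : sqNorm u = ((2 * A : ℤ) : ℂ) + (B : ℂ) * √2) : Even #(oddIndices u) := by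
  choose a b c d hz using hu
  have hsum := int_eq_of_add_mul_sqrt_two_eq ((sqNorm_eq_of_coords a b c d hz).symm.trans h)
  convert (Int.even_sum_iff_even_card_odd _ _).mp (hsum ▸ even_two_mul A) using 2
  ext i
  rw [mem_oddIndices, Finset.mem_filter, hz i, dvdZ_δ_iff_even, ← Int.not_even_iff_odd]
  simp [parity_simps]

end Vectors

lemma exists_two_add_sqrt_two_pow_succ (k : ℕ) :
    ∃ A B : ℤ, (2 + √2 : ℂ) ^ (k + 1) = ((2 * A : ℤ) : ℂ) + (B : ℂ) * √2 := by
  induction k with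
  | zero => exact ⟨1, 1, by push_cast; ring⟩
  | succ k ih =>
    obtain ⟨A, B, h⟩ := ih
    refine ⟨2 * A + B, 2 * A + 2 * B, ?_⟩
    rw [pow_succ, h]
    push_cast
    linear_combination B * sqrt_two_sq

section Generators

variable {n : ℕ}

lemma Wmat_mulVec (α : Fin n) (x : Fin n → ℂ) :
    Wmat n α *ᵥ x = Function.update x α (ω * x α) := by
  ext i
  rcases eq_or_ne i α with rfl | h <;> simp [Wmat, Matrix.mulVec, dotProduct, ite_mul, *]

lemma Xmat_mulVec (α β : Fin n) (x : Fin n → ℂ) : Xmat n α β *ᵥ x = x ∘ Equiv.swap α β := by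
  ext i
  rcases eq_or_ne i α with rfl | h₁
  · simp [Xmat, Matrix.mulVec, dotProduct, ite_mul]
  rcases eq_or_ne i β with rfl | h₂
  · simp [Xmat, Matrix.mulVec, dotProduct, ite_mul, h₁]
  · simp [Xmat, Matrix.mulVec, dotProduct, ite_mul, h₁, h₂, Equiv.swap_apply_of_ne_of_ne]

lemma Hmat_mulVec {α β : Fin n} (hαβ : α ≠ β) (x : Fin n → ℂ) :
    Hmat n α β *ᵥ x = Function.update (Function.update x α ((x α + x β) / √2)) β
      ((x α - x β) / √2) := by
  ext i
  rcases eq_or_ne i α with rfl | h₁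
  · rw [Matrix.mulVec, dotProduct, Fintype.sum_eq_add i β hαβ]
    · simp only [Hmat, Matrix.of_apply, and_self, ↓reduceIte, hαβ.symm, and_false, ne_eq, hαβ,
        not_false_eq_true, Function.update_of_ne, Function.update_self]
      ring
    · rintro j ⟨hj₁, hj₂⟩
      simp [Hmat, hj₁, hj₂, hj₁.symm]
  rcases eq_or_ne i β with rfl | h₂
  · rw [Matrix.mulVec, dotProduct, Fintype.sum_eq_add α i hαβ]
    · simp only [Hmat, Matrix.of_apply, hαβ.symm, and_true, ↓reduceIte, hαβ, and_self, and_false,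
        neg_mul, Function.update_self]
      ring
    · rintro j ⟨hj₁, hj₂⟩
      simp [Hmat, hj₁, hj₂, hj₂.symm]
  · simp [Hmat, Matrix.mulVec, dotProduct, ite_mul, h₁, h₂]

lemma sqNorm_mulVec_of_mem_gens {M : Matrix (Fin n) (Fin n) ℂ} (hM : M ∈ gens n)
    (x : Fin n → ℂ) : sqNorm (M *ᵥ x) = sqNorm x := by
  rcases hM with ⟨α, β, hαβ, rfl | rfl⟩ | ⟨α, rfl⟩
  · rw [Xmat_mulVec]
    exact Equiv.sum_comp (Equiv.swap α β) fun i => conj (x i) * x i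
  · rw [Hmat_mulVec hαβ.ne]
    refine Fintype.sum_eq_sum_of_eq_off {α, β} ?_ fun i hi => ?_
    · rw [Finset.sum_pair hαβ.ne, Finset.sum_pair hαβ.ne]
      simp only [Function.update_self, Function.update_of_ne hαβ.ne, map_div₀, map_add, map_sub,
        conj_ofReal]
      field_simp
      linear_combination -(conj (x α) * x α + conj (x β) * x β) * sqrt_two_sq
    · simp only [Finset.mem_insert, Finset.mem_singleton, not_or] at hi
      simp [Function.update_of_ne hi.1, Function.update_of_ne hi.2]
  · rw [Wmat_mulVec]
    refine Fintype.sum_eq_sum_of_eq_off {α} ?_ fun i hi => ?_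
    · simp only [Finset.sum_singleton, Function.update_self, map_mul]
      linear_combination conj (x α) * x α * conj_ω_mul_self
    · simp [Function.update_of_ne (Finset.notMem_singleton.mp hi)]

def GenStep (n : ℕ) (x y : Fin n → ℂ) : Prop := ∃ M ∈ gens n, y = M *ᵥ x

lemma sqNorm_eq_of_reflTransGen {x y : Fin n → ℂ} (h : Relation.ReflTransGen (GenStep n) x y) :
    sqNorm y = sqNorm x := by
  induction h with
  | refl => rfl
  | tail _ hstep ih =>
    obtain ⟨M, hM, rfl⟩ := hstep
    rw [sqNorm_mulVec_of_mem_gens hM, ih]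

lemma exists_list_of_reflTransGen {x y : Fin n → ℂ} (h : Relation.ReflTransGen (GenStep n) x y) :
    ∃ L : List (Matrix (Fin n) (Fin n) ℂ), (∀ M ∈ L, M ∈ gens n) ∧ L.prod *ᵥ x = y := by
  induction h with
  | refl => exact ⟨[], by simp, by simp⟩
  | tail _ hstep ih =>
    obtain ⟨M, hM, rfl⟩ := hstep
    obtain ⟨L, hL, rfl⟩ := ih
    refine ⟨M :: L, ?_, by rw [List.prod_cons, Matrix.mulVec_mulVec]⟩
    simpa [hM] using hL

lemma reflTransGen_update_ω_pow_mul (x : Fin n → ℂ) (α : Fin n) (m : ℕ) :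
    Relation.ReflTransGen (GenStep n) x (Function.update x α (ω ^ m * x α)) := by
  induction m with
  | zero => simpa using Relation.ReflTransGen.refl
  | succ m ih =>
    refine ih.tail ⟨Wmat n α, Or.inr ⟨α, rfl⟩, ?_⟩
    rw [Wmat_mulVec, Function.update_idem, Function.update_self, pow_succ', mul_assoc]

lemma reflTransGen_single_ω_pow (i : Fin (n + 1)) (p : ℕ) :
    Relation.ReflTransGen (GenStep (n + 1)) (Pi.single i (ω ^ p)) (Pi.single (Fin.last n) 1) := by
  have h₁ : Relation.ReflTransGen (GenStep (n + 1)) (Pi.single i (ω ^ p)) (Pi.single i 1) := by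
    convert reflTransGen_update_ω_pow_mul (Pi.single i (ω ^ p)) i (7 * p) using 1
    rw [Pi.single_eq_same, ← pow_add, show 7 * p + p = 4 * (2 * p) by ring, pow_mul, ω_pow_four,
      Even.neg_one_pow ⟨p, two_mul p⟩]
    ext j
    rcases eq_or_ne j i with rfl | hj <;> simp [*]
  rcases (Fin.le_last i).lt_or_eq with hlt | rfl
  · refine h₁.tail ⟨Xmat _ i (Fin.last n), Or.inl ⟨i, _, hlt, Or.inl rfl⟩, ?_⟩
    rw [Xmat_mulVec, Pi.single_comp_equiv, Equiv.symm_swap, Equiv.swap_apply_left]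
  · exact h₁

lemma exists_reflTransGen_oddIndices_ssubset {k : ℕ} {v : Fin n → ℂ}
    (hv : ∀ l, δ ^ k * v l ∈ ringZω) {i j : Fin n} (hij : i ≠ j)
    (hi : i ∈ oddIndices fun l => δ ^ k * v l) (hj : j ∈ oddIndices fun l => δ ^ k * v l) :
    ∃ w, Relation.ReflTransGen (GenStep n) v w ∧ (∀ l, δ ^ k * w l ∈ ringZω) ∧
      (oddIndices fun l => δ ^ k * w l) ⊂ oddIndices fun l => δ ^ k * v l := by
  wlog hlt : i < j generalizing i j
  · exact this hij.symm hj hi ((Ne.lt_or_gt hij).resolve_left hlt)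
  have hi' := hi
  have hj' := hj
  simp only [mem_oddIndices] at hi' hj'
  obtain ⟨m, hm⟩ := exists_dvdZ_δ_cube_add_ω_pow_mul (hv i) (hv j) hi' hj'
  set w := Function.update (Function.update v i ((v i + ω ^ m * v j) / √2)) j
    ((v i - ω ^ m * v j) / √2) with hw
  have hstep : GenStep n (Function.update v j (ω ^ m * v j)) w := by
    refine ⟨Hmat n i j, Or.inl ⟨i, j, hlt, Or.inr rfl⟩, ?_⟩
    rw [Hmat_mulVec hlt.ne, Function.update_of_ne hlt.ne, Function.update_self,
      Function.update_comm hlt.ne', Function.update_idem]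
  have hwi : dvdZ δ (δ ^ k * w i) := by
    convert dvdZ_δ_div_sqrt_two hm using 1
    simp only [hw, ne_eq, hlt.ne, not_false_eq_true, Function.update_of_ne, Function.update_self]
    ring
  have hwj : dvdZ δ (δ ^ k * w j) := by
    convert dvdZ_δ_div_sqrt_two (hm.sub (dvdZ_δ_cube_two.mul_left
      (mul_mem (pow_mem ω_mem m) (hv j)))) using 1
    simp only [hw, Function.update_self]
    ring
  have hwl (l : Fin n) (hli : l ≠ i) (hlj : l ≠ j) : w l = v l := by
    simp [hw, hli, hlj]
  refine ⟨w, (reflTransGen_update_ω_pow_mul v j m).tail hstep, fun l => ?_, ?_⟩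
  · by_cases hli : l = i
    · exact hli ▸ hwi.mem δ_mem
    by_cases hlj : l = j
    · exact hlj ▸ hwj.mem δ_mem
    rw [hwl l hli hlj]
    exact hv l
  · refine Finset.ssubset_of_subset_of_ssubset (fun l hl => ?_) (Finset.erase_ssubset hi)
    rw [mem_oddIndices] at hl
    have hli : l ≠ i := by rintro rfl; exact hl hwi
    have hlj : l ≠ j := by rintro rfl; exact hl hwj
    rw [hwl l hli hlj] at hl
    exact Finset.mem_erase.mpr ⟨hli, mem_oddIndices.mpr hl⟩

lemma reflTransGen_last_of_succ {k : ℕ}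
    (ih : ∀ v : Fin (n + 1) → ℂ, (∀ i, δ ^ k * v i ∈ ringZω) → sqNorm v = 1 →
      Relation.ReflTransGen (GenStep (n + 1)) v (Pi.single (Fin.last n) 1))
    (v : Fin (n + 1) → ℂ) (hv : ∀ i, δ ^ (k + 1) * v i ∈ ringZω) (h₁ : sqNorm v = 1) :
    Relation.ReflTransGen (GenStep (n + 1)) v (Pi.single (Fin.last n) 1) := by
  rcases (oddIndices fun i => δ ^ (k + 1) * v i).eq_empty_or_nonempty with h₀ | hne
  · refine ih v (fun i => mem_of_dvdZ_δ_mul ?_) h₁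
    rw [← mul_assoc, ← pow_succ']
    by_contra h
    exact Finset.notMem_empty i (h₀ ▸ mem_oddIndices.mpr h)
  obtain ⟨A, B, hAB⟩ := exists_two_add_sqrt_two_pow_succ k
  have heven := even_card_oddIndices hv (A := A) (B := B) (by
    rw [sqNorm_const_mul, h₁, mul_one, map_pow, ← mul_pow, conj_δ_mul_self, hAB])
  have hcard : 1 < #(oddIndices fun i => δ ^ (k + 1) * v i) := by
    obtain ⟨r, hr⟩ := heven
    have := hne.card_pos
    omega
  obtain ⟨i, hi, j, hj, hij⟩ := Finset.one_lt_card.mp hcard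
  obtain ⟨w, hvw, hw, hsub⟩ := exists_reflTransGen_oddIndices_ssubset hv hij hi hj
  exact hvw.trans (reflTransGen_last_of_succ ih w hw ((sqNorm_eq_of_reflTransGen hvw).trans h₁))
termination_by #(oddIndices fun i => δ ^ (k + 1) * v i)
decreasing_by exact Finset.card_lt_card hsub

lemma reflTransGen_last_of_mem (k : ℕ) (v : Fin (n + 1) → ℂ) (hv : ∀ i, δ ^ k * v i ∈ ringZω)
    (h₁ : sqNorm v = 1) : Relation.ReflTransGen (GenStep (n + 1)) v (Pi.single (Fin.last n) 1) := by
  induction k generalizing v with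
  | zero =>
    obtain ⟨i, p, rfl⟩ := eq_single_ω_pow_of_sqNorm_eq_one (by simpa using hv) h₁
    exact reflTransGen_single_ω_pow i p
  | succ k ih => exact reflTransGen_last_of_succ ih v hv h₁

end Generators

lemma two_pow_mul_div_two_pow_mem (a : ℤ) {m N : ℕ} (h : m ≤ N) :
    (2 : ℂ) ^ N * (a / 2 ^ m) ∈ ringZω := by
  obtain ⟨r, rfl⟩ := Nat.exists_eq_add_of_le h
  rw [show (2 : ℂ) ^ (m + r) * (a / 2 ^ m) = a * 2 ^ r by rw [pow_add]; field_simp]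
  exact mul_mem (intCast_mem _ a) (pow_mem (ofNat_mem _ 2) r)

lemma exists_δ_pow_mul_mem {x : ℂ} (hx : inDω x) : ∃ k, δ ^ k * x ∈ ringZω := by
  obtain ⟨_, _, _, _, ⟨a, na, rfl⟩, ⟨b, nb, rfl⟩, ⟨c, nc, rfl⟩, ⟨d, nd, rfl⟩, rfl⟩ := hx
  set N := na + nb + nc + nd
  have h₂ : (2 : ℂ) ^ N * (a / 2 ^ na * ω ^ 3 + b / 2 ^ nb * ω ^ 2 + c / 2 ^ nc * ω + d / 2 ^ nd)
      ∈ ringZω := by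
    rw [mul_add, mul_add, mul_add, ← mul_assoc, ← mul_assoc, ← mul_assoc]
    refine add_mem (add_mem (add_mem ?_ ?_) ?_) (two_pow_mul_div_two_pow_mem d (by omega))
    · exact mul_mem (two_pow_mul_div_two_pow_mem a (by omega)) (pow_mem ω_mem 3)
    · exact mul_mem (two_pow_mul_div_two_pow_mem b (by omega)) (pow_mem ω_mem 2)
    · exact mul_mem (two_pow_mul_div_two_pow_mem c (by omega)) ω_mem
  refine ⟨4 * N, ?_⟩
  rw [pow_mul, δ_pow_four, mul_pow, mul_comm ((2 : ℂ) ^ N), mul_assoc]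
  exact mul_mem (pow_mem (by apply_rules [ω_mem, ofNat_mem, pow_mem, add_mem, mul_mem]) N) h₂

lemma δ_pow_mul_mem_of_le {x : ℂ} {k m : ℕ} (hk : δ ^ k * x ∈ ringZω) (h : k ≤ m) :
    δ ^ m * x ∈ ringZω := by
  obtain ⟨r, rfl⟩ := Nat.exists_eq_add_of_le h
  rw [pow_add, mul_comm (δ ^ k), mul_assoc]
  exact mul_mem (pow_mem δ_mem r) hk

theorem column_lemma (n : ℕ) (v : Fin (n+1) → ℂ)
    (hD : ∀ i, inDω (v i))
    (hunit : (∑ i, (starRingEnd ℂ) (v i) * v i) = 1) :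
    ∃ L : List (Matrix (Fin (n+1)) (Fin (n+1)) ℂ),
      (∀ M ∈ L, M ∈ gens (n+1)) ∧
      L.prod.mulVec v = fun i => if i = Fin.last n then 1 else 0 := by
  choose k hk using fun i => exists_δ_pow_mul_mem (hD i)
  have hv (i : Fin (n + 1)) : δ ^ (∑ j, k j) * v i ∈ ringZω :=
    δ_pow_mul_mem_of_le (hk i) (Finset.single_le_sum (fun j _ => Nat.zero_le (k j))
      (Finset.mem_univ i))
  obtain ⟨L, hL, hLv⟩ := exists_list_of_reflTransGen (reflTransGen_last_of_mem _ v hv hunit)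
  exact ⟨L, hL, hLv.trans (funext fun i => Pi.single_apply _ _ i)⟩
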